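/- arXiv:2603.25350 — 13 statements merged into one kernel-verified Lean document; each statement's English description precedes it below -/
import Mathlib

section
/- If δ ≥ μ1²/(2β1σ1²) + μ2²/(2β2σ2²), then ψ(z) < 0 for every z ∈ (0,1). -/
noncomputable def Atilde (μ1 μ2 σ1 σ2 β1 β2 ρ z : ℝ) : ℝ :=
  (μ1^2*σ2^2*(3*ρ+1)*(ρ-1) + μ2^2*σ1^2*(3*ρ+1)*(ρ-1)
      + 2*μ1*μ2*σ1*σ2*(1-ρ)*(2*ρ^2+ρ+1)) * (z*(z-1)^3)
    + (-(β2*μ1^2*σ2^2*(2*β1+β2)) - β1*μ2^2*σ1^2*(β1+2*β2)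
      + 2*β1*β2*μ1*μ2*σ1*σ2) * (z^3*(z-1))
    + (μ1^2*σ2^2*(β1-3*ρ^2*β2+2*ρ*β2+2*β2) + μ2^2*σ1^2*(β2-3*ρ^2*β1+2*ρ*β1+2*β1)
      - 2*μ1*μ2*σ1*σ2*(β1+β2)) * (z^2*(z-1)^2)
    + (β1*β2^2*μ1^2*σ2^2 + β1^2*β2*μ2^2*σ1^2) * z^4

noncomputable def Btilde (β1 β2 ρ z : ℝ) : ℝ :=
  ((β1+β2)^2 + 2*(1-ρ^2)*β1*β2) * (z^2*(z-1)^2)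
    + (1-ρ^2)^2 * (z-1)^4 + β1^2*β2^2 * z^4
    - 2*(1-ρ^2)*(β1+β2) * (z*(z-1)^3)
    - 2*β1*β2*(β1+β2) * (z^3*(z-1))

noncomputable def psi (μ1 μ2 σ1 σ2 β1 β2 δ ρ z : ℝ) : ℝ :=
  Atilde μ1 μ2 σ1 σ2 β1 β2 ρ z - 2*δ*σ1^2*σ2^2 * Btilde β1 β2 ρ z

set_option maxHeartbeats 1000000 in
theorem psi_neg_of_large_delta
    (μ1 μ2 σ1 σ2 β1 β2 δ ρ : ℝ)
    (hμ1 : 0 < μ1) (hμ2 : 0 < μ2) (hσ1 : 0 < σ1) (hσ2 : 0 < σ2)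
    (hβ1 : 0 < β1) (hβ2 : 0 < β2) (hδ : 0 < δ)
    (hρ : ρ ∈ Set.Ioo (-1 : ℝ) 1)
    (hbig : μ1^2 / (2*β1*σ1^2) + μ2^2 / (2*β2*σ2^2) ≤ δ) :
    ∀ z ∈ Set.Ioo (0 : ℝ) 1, psi μ1 μ2 σ1 σ2 β1 β2 δ ρ z < 0 := by
  rintro z ⟨hz0, hz1⟩
  obtain ⟨hρ1, hρ2⟩ := hρ
  have hz1' : z - 1 < 0 := by linarith
  have hzne : z - 1 ≠ 0 := ne_of_lt hz1'
  have hρsq : 0 < 1 - ρ^2 := by nlinarith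
  -- sign facts for the z-factors
  have hsq : 0 < (z-1)^2 := by nlinarith
  have hcube : (z-1)^3 < 0 := by nlinarith [mul_neg_of_neg_of_pos hz1' hsq]
  have hN1 : z*(z-1)^3 < 0 := mul_neg_of_pos_of_neg hz0 hcube
  have hP2 : 0 < z^2*(z-1)^2 := mul_pos (by positivity) hsq
  have hN3 : z^3*(z-1) < 0 := mul_neg_of_pos_of_neg (by positivity) hz1'
  have hP4 : 0 < (z-1)^4 := by nlinarith [sq_nonneg ((z-1)^2)]
  have hP1 : 0 < (1-ρ^2)^2*(z-1)^4 := mul_pos (by positivity) hP4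
  -- B = q^2 ≥ 0
  have hB : 0 ≤ Btilde β1 β2 ρ z := by
    have hq : Btilde β1 β2 ρ z
        = ((1-ρ^2)*(z-1)^2 - (β1+β2)*z*(z-1) + β1*β2*z^2)^2 := by
      unfold Btilde; ring
    rw [hq]; positivity
  -- coefficient positivity
  have hc1 : 0 < 1 + ρ^2 - 2*ρ^3 := by nlinarith [sq_nonneg (1+2*ρ), sq_nonneg ρ]
  have hc2 : 0 < 2 - 2*ρ + ρ^2 := by nlinarith [sq_nonneg (1-ρ)]
  -- key negativity after clearing denominators
  have key : β1*β2*Atilde μ1 μ2 σ1 σ2 β1 β2 ρ z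
      - (β2*μ1^2*σ2^2 + β1*μ2^2*σ1^2) * Btilde β1 β2 ρ z < 0 := by
    have hid : β1*β2*Atilde μ1 μ2 σ1 σ2 β1 β2 ρ z
        - (β2*μ1^2*σ2^2 + β1*μ2^2*σ1^2) * Btilde β1 β2 ρ z =
        -((μ2^2*σ1^2*β1 + μ1^2*σ2^2*β2) * ((1-ρ^2)^2*(z-1)^4))
        + (μ2^2*σ1^2*β1*β2*(1-ρ)^2 + μ1^2*σ2^2*β1*β2*(1-ρ)^2
            + 2*μ2^2*σ1^2*β1^2*(1-ρ^2) + 2*μ1^2*σ2^2*β2^2*(1-ρ^2)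
            + 2*μ1*μ2*σ1*σ2*β1*β2*(1+ρ^2-2*ρ^3)) * (z*(z-1)^3)
        - (μ2^2*σ1^2*β1^2*β2*(2-2*ρ+ρ^2) + μ1^2*σ2^2*β1*β2^2*(2-2*ρ+ρ^2)
            + μ2^2*σ1^2*β1^3 + μ1^2*σ2^2*β2^3
            + 2*μ1*μ2*σ1*σ2*(β1*β2^2+β1^2*β2)) * (z^2*(z-1)^2)
        + (μ2^2*σ1^2*β1^3*β2 + μ1^2*σ2^2*β1*β2^3 + 2*μ1*μ2*σ1*σ2*β1^2*β2^2) * (z^3*(z-1)) := by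
      unfold Atilde Btilde; ring
    rw [hid]
    have t1 : 0 < (μ2^2*σ1^2*β1 + μ1^2*σ2^2*β2) * ((1-ρ^2)^2*(z-1)^4) :=
      mul_pos (by positivity) hP1
    have hc1' : 0 ≤ μ2^2*σ1^2*β1*β2*(1-ρ)^2 + μ1^2*σ2^2*β1*β2*(1-ρ)^2
        + 2*μ2^2*σ1^2*β1^2*(1-ρ^2) + 2*μ1^2*σ2^2*β2^2*(1-ρ^2)
        + 2*μ1*μ2*σ1*σ2*β1*β2*(1+ρ^2-2*ρ^3) := by positivity
    have t2 : (μ2^2*σ1^2*β1*β2*(1-ρ)^2 + μ1^2*σ2^2*β1*β2*(1-ρ)^2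
        + 2*μ2^2*σ1^2*β1^2*(1-ρ^2) + 2*μ1^2*σ2^2*β2^2*(1-ρ^2)
        + 2*μ1*μ2*σ1*σ2*β1*β2*(1+ρ^2-2*ρ^3)) * (z*(z-1)^3) ≤ 0 :=
      mul_nonpos_of_nonneg_of_nonpos hc1' hN1.le
    have t3 : 0 ≤ (μ2^2*σ1^2*β1^2*β2*(2-2*ρ+ρ^2) + μ1^2*σ2^2*β1*β2^2*(2-2*ρ+ρ^2)
        + μ2^2*σ1^2*β1^3 + μ1^2*σ2^2*β2^3
        + 2*μ1*μ2*σ1*σ2*(β1*β2^2+β1^2*β2)) * (z^2*(z-1)^2) :=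
      mul_nonneg (by positivity) hP2.le
    have t4 : (μ2^2*σ1^2*β1^3*β2 + μ1^2*σ2^2*β1*β2^3 + 2*μ1*μ2*σ1*σ2*β1^2*β2^2)
        * (z^3*(z-1)) ≤ 0 := by
      apply mul_nonpos_of_nonneg_of_nonpos (by positivity) hN3.le
    linarith
  -- from hbig: β2μ1²σ2² + β1μ2²σ1² ≤ 2δβ1β2σ1²σ2²
  have hδ' : β2*μ1^2*σ2^2 + β1*μ2^2*σ1^2 ≤ 2*δ*σ1^2*σ2^2*β1*β2 := by
    have h1 : μ1^2 / (2*β1*σ1^2) * (2*β1*β2*σ1^2*σ2^2) = β2*μ1^2*σ2^2 := by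
      field_simp
    have h2 : μ2^2 / (2*β2*σ2^2) * (2*β1*β2*σ1^2*σ2^2) = β1*μ2^2*σ1^2 := by
      field_simp
    have hpos : (0:ℝ) < 2*β1*β2*σ1^2*σ2^2 := by positivity
    nlinarith [mul_le_mul_of_nonneg_right hbig hpos.le]
  have hmono : 2*δ*σ1^2*σ2^2*β1*β2 * Btilde β1 β2 ρ z
      ≥ (β2*μ1^2*σ2^2 + β1*μ2^2*σ1^2) * Btilde β1 β2 ρ z :=
    mul_le_mul_of_nonneg_right hδ' hB
  have hfin : β1*β2 * psi μ1 μ2 σ1 σ2 β1 β2 δ ρ z < 0 := by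
    unfold psi
    have : β1*β2 * (Atilde μ1 μ2 σ1 σ2 β1 β2 ρ z - 2*δ*σ1^2*σ2^2 * Btilde β1 β2 ρ z)
        = β1*β2*Atilde μ1 μ2 σ1 σ2 β1 β2 ρ z
          - 2*δ*σ1^2*σ2^2*β1*β2 * Btilde β1 β2 ρ z := by ring
    rw [this]
    linarith
  have hbb : (0:ℝ) < β1*β2 := by positivity
  nlinarith [hfin]
end

section
/- If μ1² < 2δβ1σ1², μ2² < 2δβ2σ2², and β2μ1²σ2² + β1μ2²σ1² − 2δβ1β2σ1²σ2² ≤ 0, then −β2μ1²σ2²(2β1+β2) − β1μ2²σ1²(β1+2β2) + 2β1β2μ1μ2σ1σ2 + 4δβ1β2(β1+β2)σ1²σ2² > 0. -/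
theorem h2_pos
    (μ1 μ2 σ1 σ2 β1 β2 δ : ℝ)
    (hμ1 : 0 < μ1) (hμ2 : 0 < μ2) (hσ1 : 0 < σ1) (hσ2 : 0 < σ2)
    (hβ1 : 0 < β1) (hβ2 : 0 < β2) (hδ : 0 < δ)
    (h1 : μ1^2 < 2*δ*β1*σ1^2) (h2 : μ2^2 < 2*δ*β2*σ2^2)
    (h3 : β2*μ1^2*σ2^2 + β1*μ2^2*σ1^2 - 2*δ*β1*β2*σ1^2*σ2^2 ≤ 0) :
    0 < -(β2*μ1^2*σ2^2*(2*β1+β2)) - β1*μ2^2*σ1^2*(β1+2*β2)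
        + 2*β1*β2*μ1*μ2*σ1*σ2 + 4*δ*β1*β2*(β1+β2)*σ1^2*σ2^2 := by
  nlinarith [sq_nonneg (β2*μ1*σ2 + β1*μ2*σ1), mul_nonpos_of_nonneg_of_nonpos (by positivity : (0:ℝ) ≤ 2*(β1+β2)) h3, mul_pos (mul_pos hβ2 hμ1) hσ2, mul_pos (mul_pos hβ1 hμ2) hσ1]
end

section
/- If μ1² < 2δβ1σ1² and μ2² < 2δβ2σ2², then (μ1²σ2² + μ2²σ1²)(3ρ+1)(ρ−1) + 2μ1μ2σ1σ2(1−ρ)(2ρ²+ρ+1) + 4δ(1−ρ²)(β1+β2)σ1²σ2² > 0. -/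
theorem h4_pos
    (μ1 μ2 σ1 σ2 β1 β2 δ ρ : ℝ)
    (hμ1 : 0 < μ1) (hμ2 : 0 < μ2) (hσ1 : 0 < σ1) (hσ2 : 0 < σ2)
    (hβ1 : 0 < β1) (hβ2 : 0 < β2) (hδ : 0 < δ)
    (hρ : ρ ∈ Set.Ioo (-1 : ℝ) 1)
    (h1 : μ1^2 < 2*δ*β1*σ1^2) (h2 : μ2^2 < 2*δ*β2*σ2^2) :
    0 < (μ1^2*σ2^2 + μ2^2*σ1^2)*(3*ρ+1)*(ρ-1)
        + 2*μ1*μ2*σ1*σ2*(1-ρ)*(2*ρ^2+ρ+1)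
        + 4*δ*(1-ρ^2)*(β1+β2)*σ1^2*σ2^2 := by
  obtain ⟨hl, hr⟩ := hρ
  have h1ρ : 0 < 1 - ρ := by linarith
  have h1ρ2 : 0 < 1 - ρ^2 := by nlinarith
  have hq : 0 < 2*ρ^2 + ρ + 1 := by nlinarith [sq_nonneg (2*ρ+1)]
  set A := μ1*σ2 with hA
  set B := μ2*σ1 with hB
  have hApos : 0 < A := mul_pos hμ1 hσ2
  have hBpos : 0 < B := mul_pos hμ2 hσ1
  have key1 : 2*(1-ρ^2)*(A^2+B^2) < 4*δ*(1-ρ^2)*(β1+β2)*σ1^2*σ2^2 := by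
    have e1 : A^2 < 2*δ*β1*σ1^2*σ2^2 := by
      have := mul_lt_mul_of_pos_right h1 (pow_pos hσ2 2)
      nlinarith
    have e2 : B^2 < 2*δ*β2*σ1^2*σ2^2 := by
      have := mul_lt_mul_of_pos_right h2 (pow_pos hσ1 2)
      nlinarith
    nlinarith
  have key2 : 0 ≤ (A^2+B^2)*(3*ρ+1)*(ρ-1) + 2*A*B*(1-ρ)*(2*ρ^2+ρ+1) + 2*(1-ρ^2)*(A^2+B^2) := by
    have : (A^2+B^2)*(3*ρ+1)*(ρ-1) + 2*A*B*(1-ρ)*(2*ρ^2+ρ+1) + 2*(1-ρ^2)*(A^2+B^2)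
        = (1-ρ)*((A^2+B^2)*(1-ρ) + 2*A*B*(2*ρ^2+ρ+1)) := by ring
    rw [this]
    positivity
  have hgoal : (μ1^2*σ2^2 + μ2^2*σ1^2)*(3*ρ+1)*(ρ-1)
        + 2*μ1*μ2*σ1*σ2*(1-ρ)*(2*ρ^2+ρ+1)
        + 4*δ*(1-ρ^2)*(β1+β2)*σ1^2*σ2^2
      = ((A^2+B^2)*(3*ρ+1)*(ρ-1) + 2*A*B*(1-ρ)*(2*ρ^2+ρ+1) + 2*(1-ρ^2)*(A^2+B^2))
        + (4*δ*(1-ρ^2)*(β1+β2)*σ1^2*σ2^2 - 2*(1-ρ^2)*(A^2+B^2)) := by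
    simp only [hA, hB]; ring
  rw [hgoal]
  linarith
end

section
/- If μ1² < 2δβ1σ1², μ2² < 2δβ2σ2², and β2μ1²σ2² + β1μ2²σ1² − 2δβ1β2σ1²σ2² ≤ 0, then μ1²σ2²(β1 − 3ρ²β2 + 2ρβ2 + 2β2) + μ2²σ1²(β2 − 3ρ²β1 + 2ρβ1 + 2β1) − 2μ1μ2σ1σ2(β1+β2) − 2δσ1²σ2²(β1+β2)² − 4δσ1²σ2²(1−ρ²)β1β2 < 0. -/
theorem h5_neg
    (μ1 μ2 σ1 σ2 β1 β2 δ ρ : ℝ)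
    (hμ1 : 0 < μ1) (hμ2 : 0 < μ2) (hσ1 : 0 < σ1) (hσ2 : 0 < σ2)
    (hβ1 : 0 < β1) (hβ2 : 0 < β2) (hδ : 0 < δ)
    (hρ : ρ ∈ Set.Ioo (-1 : ℝ) 1)
    (h1 : μ1^2 < 2*δ*β1*σ1^2) (h2 : μ2^2 < 2*δ*β2*σ2^2)
    (h3 : β2*μ1^2*σ2^2 + β1*μ2^2*σ1^2 - 2*δ*β1*β2*σ1^2*σ2^2 ≤ 0) :
    μ1^2*σ2^2*(β1 - 3*ρ^2*β2 + 2*ρ*β2 + 2*β2)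
      + μ2^2*σ1^2*(β2 - 3*ρ^2*β1 + 2*ρ*β1 + 2*β1)
      - 2*μ1*μ2*σ1*σ2*(β1+β2)
      - 2*δ*σ1^2*σ2^2*(β1+β2)^2
      - 4*δ*σ1^2*σ2^2*(1-ρ^2)*β1*β2 < 0 := by
  have hρ2 : ρ^2 < 1 := by
    have := abs_lt.mpr ⟨hρ.1, hρ.2⟩
    nlinarith [abs_nonneg ρ, sq_abs ρ]
  have hc : (0:ℝ) < 2 - 2*ρ + ρ^2 := by nlinarith [sq_nonneg (1-ρ)]
  have f1 : β1 * (μ1^2 * σ2^2) < 2*δ*β1^2*(σ1^2*σ2^2) := by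
    have := mul_lt_mul_of_pos_left h1 (mul_pos hβ1 (pow_pos hσ2 2))
    nlinarith [this]
  have f2 : β2 * (μ2^2 * σ1^2) < 2*δ*β2^2*(σ1^2*σ2^2) := by
    have := mul_lt_mul_of_pos_left h2 (mul_pos hβ2 (pow_pos hσ1 2))
    nlinarith [this]
  have f3 : (4 - 2*ρ^2) * (β2*μ1^2*σ2^2 + β1*μ2^2*σ1^2) ≤
      (4 - 2*ρ^2) * (2*δ*β1*β2*σ1^2*σ2^2) := by
    have h4 : (0:ℝ) < 4 - 2*ρ^2 := by nlinarith
    nlinarith [mul_le_mul_of_nonneg_left (by linarith : β2*μ1^2*σ2^2 + β1*μ2^2*σ1^2 ≤ 2*δ*β1*β2*σ1^2*σ2^2) h4.le]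
  have f4 : 0 ≤ (2 - 2*ρ + ρ^2) * (β2*(μ1^2*σ2^2) + β1*(μ2^2*σ1^2))
      + 2*(μ1*μ2*σ1*σ2)*(β1+β2) := by
    have : 0 < μ1*μ2*σ1*σ2 := by positivity
    have hnn : 0 ≤ β2*(μ1^2*σ2^2) + β1*(μ2^2*σ1^2) := by positivity
    nlinarith [mul_nonneg hc.le hnn]
  nlinarith [f1, f2, f3, f4]
end

section
/- Suppose γ1 ∈ (0,1) satisfies ψ(γ1) = 0 and the denominators in the definitions of w1 and w2 are nonzero. Then (1/2)β1σ1²·γ1²/w1² + (1/2)β2σ2²·γ1²/w2² − μ1γ1/w1 − μ2γ1/w2 + δ < 0. -/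
set_option maxHeartbeats 4000000 in
theorem v_prime_plus_v_sq_neg_at_w0
    (μ1 μ2 σ1 σ2 β1 β2 δ ρ γ1 : ℝ)
    (hμ1 : 0 < μ1) (hμ2 : 0 < μ2) (hσ1 : 0 < σ1) (hσ2 : 0 < σ2)
    (hβ1 : 0 < β1) (hβ2 : 0 < β2) (hδ : 0 < δ)
    (hρ : ρ ∈ Set.Ioo (-1 : ℝ) 1)
    (hγ : γ1 ∈ Set.Ioo (0 : ℝ) 1)
    (hψ : psi μ1 μ2 σ1 σ2 β1 β2 δ ρ γ1 = 0)
    (hden1 : (μ1*σ2 - ρ*μ2*σ1)*(γ1-1) - β2*μ1*σ2*γ1 ≠ 0)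
    (hden2 : (μ2*σ1 - ρ*μ1*σ2)*(γ1-1) - β1*μ2*σ1*γ1 ≠ 0)
    (w1 w2 : ℝ)
    (hw1 : w1 = σ1^2*σ2*((β1+β2)*γ1*(γ1-1) - (1-ρ^2)*(γ1-1)^2 - β1*β2*γ1^2)
              / ((μ1*σ2 - ρ*μ2*σ1)*(γ1-1) - β2*μ1*σ2*γ1))
    (hw2 : w2 = σ1*σ2^2*((β1+β2)*γ1*(γ1-1) - (1-ρ^2)*(γ1-1)^2 - β1*β2*γ1^2)
              / ((μ2*σ1 - ρ*μ1*σ2)*(γ1-1) - β1*μ2*σ1*γ1)) :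
    (1/2)*β1*σ1^2*(γ1^2/w1^2) + (1/2)*β2*σ2^2*(γ1^2/w2^2)
      - μ1*(γ1/w1) - μ2*(γ1/w2) + δ < 0 := by
  obtain ⟨hρ1, hρ2⟩ := hρ
  obtain ⟨hγ0, hγ1⟩ := hγ
  set D1 : ℝ := (μ1*σ2 - ρ*μ2*σ1)*(γ1-1) - β2*μ1*σ2*γ1 with hD1def
  set D2 : ℝ := (μ2*σ1 - ρ*μ1*σ2)*(γ1-1) - β1*μ2*σ1*γ1 with hD2def
  have hQ : (β1+β2)*γ1*(γ1-1) - (1-ρ^2)*(γ1-1)^2 - β1*β2*γ1^2 < 0 := by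
    have t1 : 0 < (β1+β2)*γ1*(1-γ1) :=
      mul_pos (mul_pos (add_pos hβ1 hβ2) hγ0) (by linarith)
    have t2 : 0 ≤ (1-ρ^2)*(γ1-1)^2 := mul_nonneg (by nlinarith) (sq_nonneg _)
    have t3 : 0 < β1*β2*γ1^2 := mul_pos (mul_pos hβ1 hβ2) (by positivity)
    nlinarith [t1, t2, t3]
  set Q : ℝ := (β1+β2)*γ1*(γ1-1) - (1-ρ^2)*(γ1-1)^2 - β1*β2*γ1^2 with hQdef
  clear_value D1 D2
  have hQne : Q ≠ 0 := ne_of_lt hQ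
  have hσ1ne : σ1 ≠ 0 := ne_of_gt hσ1
  have hσ2ne : σ2 ≠ 0 := ne_of_gt hσ2
  set S : ℝ := μ1*σ2*((1-ρ)*(1-γ1)+β2*γ1) + μ2*σ1*((1-ρ)*(1-γ1)+β1*γ1) with hSdef
  clear_value Q S
  have hS : 0 < S := by
    have h1 : 0 < (1-ρ)*(1-γ1)+β2*γ1 := by nlinarith
    have h2 : 0 < (1-ρ)*(1-γ1)+β1*γ1 := by nlinarith
    have := mul_pos (mul_pos hμ1 hσ2) h1
    have := mul_pos (mul_pos hμ2 hσ1) h2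
    rw [hSdef]; nlinarith
  -- Step B : Btilde = Q^2
  have hB : Btilde β1 β2 ρ γ1 = Q^2 := by
    rw [hQdef]; unfold Btilde; ring
  -- Step A : the key polynomial identity
  have hA : β1*γ1^2*D1^2 + β2*γ1^2*D2^2 - 2*γ1*Q*(μ1*σ2*D1 + μ2*σ1*D2)
      + Atilde μ1 μ2 σ1 σ2 β1 β2 ρ γ1 = γ1*(γ1-1)*S^2 := by
    rw [hQdef, hD1def, hD2def, hSdef]; unfold Atilde; ring
  -- Step C : express the goal quantity times 2σ1²σ2²Q²
  have hC : ((1/2)*β1*σ1^2*(γ1^2/w1^2) + (1/2)*β2*σ2^2*(γ1^2/w2^2)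
      - μ1*(γ1/w1) - μ2*(γ1/w2) + δ) * (2*σ1^2*σ2^2*Q^2)
      = β1*γ1^2*D1^2 + β2*γ1^2*D2^2 - 2*γ1*Q*(μ1*σ2*D1 + μ2*σ1*D2)
        + 2*δ*σ1^2*σ2^2*Q^2 := by
    rw [hw1, hw2]
    rw [div_pow, div_pow, div_div_eq_mul_div, div_div_eq_mul_div]
    field_simp
    ring
  have key : ((1/2)*β1*σ1^2*(γ1^2/w1^2) + (1/2)*β2*σ2^2*(γ1^2/w2^2)
      - μ1*(γ1/w1) - μ2*(γ1/w2) + δ) * (2*σ1^2*σ2^2*Q^2)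
      = γ1*(γ1-1)*S^2 := by
    have hψ' := hψ
    unfold psi at hψ'
    rw [hB] at hψ'
    rw [hC]
    linarith [hA, hψ']
  have hpos : 0 < 2*σ1^2*σ2^2*Q^2 := by positivity
  have hneg : γ1*(γ1-1)*S^2 < 0 := by
    have h1 : γ1*(γ1-1) < 0 := by nlinarith
    have h2 : 0 < S^2 := pow_pos hS 2
    nlinarith
  nlinarith [key, hpos, hneg]
end

section
/- Under the stated hypotheses (in particular K3 > 0 and N3(γ1/w0)² − N2(γ1/w0) + δ < 0), there exists b ∈ (w0, ∞) such that v'(b) + v(b)² = 0, where v(x) := (N1/(N1−N3))·(K3·γ2+·e^{γ2+·x} + γ2−·e^{γ2−·x})/(K3·e^{γ2+·x} + e^{γ2−·x}). -/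
set_option maxHeartbeats 1000000


open Real

theorem barrier_exists_case1
    (N1 N2 N3 δ w0 γ1 : ℝ)
    (hN1 : 0 < N1) (hN2 : 0 < N2) (hN3 : 0 < N3) (hδ : 0 < δ) (hw0 : 0 < w0)
    (hne : N1 ≠ N3)
    (hdisc : 0 < N2^2 + 4*δ*(N1 - N3))
    (hγ : γ1 ∈ Set.Ioo (0 : ℝ) 1)
    (γ2p γ2m K3 : ℝ)
    (hγ2p : γ2p = (-N2 + Real.sqrt (N2^2 + 4*δ*(N1 - N3))) / (2*N1))
    (hγ2m : γ2m = (-N2 - Real.sqrt (N2^2 + 4*δ*(N1 - N3))) / (2*N1))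
    (hγ2pne : γ2p ≠ (1 - N3/N1) * (γ1/w0))
    (hK3 : K3 = ((1 - N3/N1) * (γ1/w0) - γ2m) / (γ2p - (1 - N3/N1) * (γ1/w0))
                  * Real.exp ((γ2m - γ2p) * w0))
    (hK3pos : 0 < K3)
    (hneg : N3*(γ1/w0)^2 - N2*(γ1/w0) + δ < 0)
    (v : ℝ → ℝ)
    (hv : ∀ x, v x = (N1/(N1 - N3)) * (K3*γ2p*Real.exp (γ2p*x) + γ2m*Real.exp (γ2m*x))
                      / (K3*Real.exp (γ2p*x) + Real.exp (γ2m*x))) :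
    ∃ b, w0 < b ∧ deriv v b + (v b)^2 = 0 := by
  have hN1' : N1 ≠ 0 := ne_of_gt hN1
  have hne' : N1 - N3 ≠ 0 := sub_ne_zero.mpr hne
  set s := Real.sqrt (N2^2 + 4*δ*(N1 - N3)) with hs
  have hs2 : s^2 = N2^2 + 4*δ*(N1 - N3) := Real.sq_sqrt (le_of_lt hdisc)
  have hspos : 0 < s := Real.sqrt_pos.mpr hdisc
  -- Vieta-type identities
  have hp : N1^2*γ2p^2 + N1*N2*γ2p = δ*(N1-N3) := by
    rw [hγ2p]; field_simp; ring_nf; linear_combination hs2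
  have hm : N1^2*γ2m^2 + N1*N2*γ2m = δ*(N1-N3) := by
    rw [hγ2m]; field_simp; ring_nf; linear_combination hs2
  have hpmd : γ2p - γ2m = s/N1 := by rw [hγ2p, hγ2m]; field_simp; ring
  have hpm : γ2m < γ2p := by
    have : 0 < γ2p - γ2m := by rw [hpmd]; positivity
    linarith
  -- denominator positivity
  have hg : ∀ x : ℝ, 0 < K3*Real.exp (γ2p*x) + Real.exp (γ2m*x) := by
    intro x; positivity
  -- derivative of v
  have hder : ∀ x : ℝ, HasDerivAt v
      ((N1/(N1 - N3)) * (K3*(γ2p-γ2m)^2*(Real.exp (γ2p*x)*Real.exp (γ2m*x)))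
        / (K3*Real.exp (γ2p*x) + Real.exp (γ2m*x))^2) x := by
    intro x
    have hvf : v = fun x => (N1/(N1 - N3)) * (K3*γ2p*Real.exp (γ2p*x) + γ2m*Real.exp (γ2m*x))
                      / (K3*Real.exp (γ2p*x) + Real.exp (γ2m*x)) := funext hv
    rw [hvf]
    have hep : HasDerivAt (fun x : ℝ => Real.exp (γ2p*x)) (Real.exp (γ2p*x) * γ2p) x := by
      simpa using ((hasDerivAt_id x).const_mul γ2p).exp
    have hem : HasDerivAt (fun x : ℝ => Real.exp (γ2m*x)) (Real.exp (γ2m*x) * γ2m) x := by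
      simpa using ((hasDerivAt_id x).const_mul γ2m).exp
    have hnum : HasDerivAt (fun x : ℝ => (N1/(N1 - N3)) * (K3*γ2p*Real.exp (γ2p*x) + γ2m*Real.exp (γ2m*x)))
        ((N1/(N1 - N3)) * (K3*γ2p*(Real.exp (γ2p*x) * γ2p) + γ2m*(Real.exp (γ2m*x) * γ2m))) x :=
      ((hep.const_mul (K3*γ2p)).add (hem.const_mul γ2m)).const_mul _
    have hden : HasDerivAt (fun x : ℝ => K3*Real.exp (γ2p*x) + Real.exp (γ2m*x))
        (K3*(Real.exp (γ2p*x) * γ2p) + Real.exp (γ2m*x) * γ2m) x :=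
      (hep.const_mul K3).add hem
    have h := hnum.div hden (ne_of_gt (hg x))
    refine h.congr_deriv ?_
    congr 1
    ring
  -- Riccati identity (algebraic core)
  have key : ∀ c a b : ℝ, c*(N1-N3) = N1 → 0 < a → 0 < b →
      c * (K3*(γ2p-γ2m)^2*(a*b)) / (K3*a + b)^2
        + (c * (K3*γ2p*a + γ2m*b) / (K3*a + b))^2
      = (N3*(c * (K3*γ2p*a + γ2m*b) / (K3*a + b))^2
          - N2*(c * (K3*γ2p*a + γ2m*b) / (K3*a + b)) + δ)/N1 := by
    intro c a b hc ha hb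
    have hD : K3*a + b ≠ 0 := by positivity
    have hD2 : (K3*a+b)^2 ≠ 0 := pow_ne_zero _ hD
    rw [div_pow, ← add_div, div_eq_div_iff hD2 hN1']
    have hexp : (N3*((c*(K3*γ2p*a + γ2m*b))^2/(K3*a+b)^2)
          - N2*(c*(K3*γ2p*a + γ2m*b)/(K3*a+b)) + δ) * (K3*a+b)^2
        = N3*(c*(K3*γ2p*a + γ2m*b))^2 - N2*(c*(K3*γ2p*a+γ2m*b))*(K3*a+b)
            + δ*(K3*a+b)^2 := by
      field_simp
    rw [hexp]
    apply mul_left_cancel₀ hN1'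
    linear_combination (c*(K3^2*a^2 + K3*a*b)) * hp + (c*(K3*a*b + b^2)) * hm
      + (δ*(K3*a+b)^2 + N1*c*(K3*γ2p*a+γ2m*b)^2) * hc
  have hcN : (N1/(N1-N3)) * (N1-N3) = N1 := div_mul_cancel₀ _ hne'
  have hric : ∀ x : ℝ, deriv v x + (v x)^2 = (N3*(v x)^2 - N2*(v x) + δ)/N1 := by
    intro x
    rw [(hder x).deriv, hv x]
    exact key _ _ _ hcN (Real.exp_pos _) (Real.exp_pos _)
  -- value at w0
  have hvw0 : v w0 = γ1/w0 := by
    have hA : γ2p - (1 - N3/N1) * (γ1/w0) ≠ 0 := sub_ne_zero.mpr hγ2pne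
    have h1 : K3*(γ2p - (1 - N3/N1)*(γ1/w0))
        = ((1 - N3/N1)*(γ1/w0) - γ2m)*Real.exp ((γ2m-γ2p)*w0) := by
      rw [hK3, div_mul_eq_mul_div, div_mul_cancel₀ _ hA]
    have hEe : Real.exp ((γ2m-γ2p)*w0) * Real.exp (γ2p*w0) = Real.exp (γ2m*w0) := by
      rw [← Real.exp_add]; congr 1; ring
    have hnA : K3*γ2p*Real.exp (γ2p*w0) + γ2m*Real.exp (γ2m*w0)
        = ((1 - N3/N1)*(γ1/w0)) * (K3*Real.exp (γ2p*w0) + Real.exp (γ2m*w0)) := by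
      linear_combination Real.exp (γ2p*w0) * h1
        + ((1 - N3/N1)*(γ1/w0) - γ2m) * hEe
    rw [hv w0, hnA]
    rw [mul_div_assoc, mul_div_assoc, div_self (ne_of_gt (hg w0)), mul_one]
    field_simp
  -- limit of v at infinity
  have hformula : ∀ x : ℝ, v x
      = (N1/(N1-N3)) * (K3*γ2p + γ2m*Real.exp ((γ2m-γ2p)*x)) / (K3 + Real.exp ((γ2m-γ2p)*x)) := by
    intro x
    rw [hv x]
    have he : (γ2m - γ2p) * x = γ2m*x - γ2p*x := by ring
    rw [he, Real.exp_sub]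
    have e1 := Real.exp_pos (γ2p*x)
    have e2 := Real.exp_pos (γ2m*x)
    have hgx := ne_of_gt (hg x)
    have hKd : K3 + Real.exp (γ2m*x) / Real.exp (γ2p*x) ≠ 0 := by positivity
    field_simp
  have h0 : Filter.Tendsto (fun x : ℝ => Real.exp ((γ2m-γ2p)*x)) Filter.atTop (nhds 0) := by
    have h1 : Filter.Tendsto (fun x : ℝ => (γ2m-γ2p)*x) Filter.atTop Filter.atBot := by
      apply Filter.Tendsto.const_mul_atTop_of_neg (by linarith : γ2m - γ2p < 0) Filter.tendsto_id
    exact Real.tendsto_exp_atBot.comp h1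
  have hvlim : Filter.Tendsto v Filter.atTop (nhds ((N1/(N1-N3)) * γ2p)) := by
    have hnum : Filter.Tendsto (fun x : ℝ => (N1/(N1-N3)) * (K3*γ2p + γ2m*Real.exp ((γ2m-γ2p)*x)))
        Filter.atTop (nhds ((N1/(N1-N3)) * (K3*γ2p + γ2m*0))) :=
      (Filter.Tendsto.const_mul _ (Filter.Tendsto.const_add _ (h0.const_mul _)))
    have hden : Filter.Tendsto (fun x : ℝ => K3 + Real.exp ((γ2m-γ2p)*x))
        Filter.atTop (nhds (K3 + 0)) := Filter.Tendsto.const_add _ h0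
    have hlim := hnum.div hden (by simpa using hK3pos.ne')
    have heq : (N1/(N1-N3)) * (K3*γ2p + γ2m*0) / (K3 + 0) = (N1/(N1-N3)) * γ2p := by
      field_simp
      ring
    rw [heq] at hlim
    rw [show v = _ from funext hformula]
    exact hlim
  -- continuity of v
  have hvc : Continuous v := by
    have hvf : v = fun x => (N1/(N1 - N3)) * (K3*γ2p*Real.exp (γ2p*x) + γ2m*Real.exp (γ2m*x))
                      / (K3*Real.exp (γ2p*x) + Real.exp (γ2m*x)) := funext hv
    rw [hvf]
    apply Continuous.div
    · fun_prop
    · fun_prop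
    · exact fun x => ne_of_gt (hg x)
  set F : ℝ → ℝ := fun x => (N3*(v x)^2 - N2*(v x) + δ)/N1 with hF
  have hFc : Continuous F := by
    apply Continuous.div_const
    fun_prop
  have hFw0 : F w0 < 0 := by
    rw [hF]
    simp only [hvw0]
    exact div_neg_of_neg_of_pos hneg hN1
  -- limit of F is positive
  have hppos : γ2p ≠ 0 := by
    intro h
    rw [h] at hp
    have h0 : δ * (N1 - N3) = 0 := by linarith [hp]
    rcases mul_eq_zero.mp h0 with h' | h'
    · exact (ne_of_gt hδ) h'
    · exact hne' h'
  have hLpos : 0 < (N3*((N1/(N1-N3)) * γ2p)^2 - N2*((N1/(N1-N3)) * γ2p) + δ)/N1 := by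
    have hLid : N3*((N1/(N1-N3)) * γ2p)^2 - N2*((N1/(N1-N3)) * γ2p) + δ
        = N1*((N1/(N1-N3)) * γ2p)^2 := by
      apply mul_left_cancel₀ hN1'
      linear_combination (-(N1/(N1-N3))) * hp
        + (-(N1*(N1/(N1-N3))*γ2p^2 + δ)) * hcN
    rw [hLid]
    have : ((N1/(N1-N3)) * γ2p) ≠ 0 := by
      apply mul_ne_zero _ hppos
      exact div_ne_zero hN1' hne'
    have h2 : 0 < ((N1/(N1-N3)) * γ2p)^2 := by positivity
    positivity
  have hFlim : Filter.Tendsto F Filter.atTop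
      (nhds ((N3*((N1/(N1-N3)) * γ2p)^2 - N2*((N1/(N1-N3)) * γ2p) + δ)/N1)) := by
    apply Filter.Tendsto.div_const
    exact ((hvlim.pow 2).const_mul _).sub (hvlim.const_mul _) |>.add tendsto_const_nhds
  have hev : ∀ᶠ x in Filter.atTop, 0 < F x :=
    hFlim.eventually (eventually_gt_nhds hLpos)
  obtain ⟨T, hT⟩ := (hev.and (Filter.eventually_gt_atTop w0)).exists
  obtain ⟨hFT, hTw0⟩ := hT
  -- IVT
  have hsub := intermediate_value_Icc (le_of_lt hTw0) hFc.continuousOn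
  have h0mem : (0:ℝ) ∈ Set.Icc (F w0) (F T) := ⟨le_of_lt hFw0, le_of_lt hFT⟩
  obtain ⟨b, hbmem, hFb⟩ := hsub h0mem
  refine ⟨b, ?_, ?_⟩
  · rcases lt_or_eq_of_le hbmem.1 with h | h
    · exact h
    · exfalso; rw [← h] at hFb; rw [hFb] at hFw0; exact lt_irrefl 0 hFw0
  · rw [hric b]; exact hFb
end

section
/- Under the stated hypotheses (in particular N1·(γ1/w0)² − N2·(γ1/w0) + δ < 0), there exists b ∈ (w0, ∞) such that v(b)² + v'(b) = 0, where v(x) := (δ/N2)·[1 − e^{−(N2/N1)(x−w0)}] + (γ1/w0)·e^{−(N2/N1)(x−w0)}. -/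
theorem barrier_exists_case2
    (N1 N2 δ w0 γ1 : ℝ)
    (hN1 : 0 < N1) (hN2 : 0 < N2) (hδ : 0 < δ) (hw0 : 0 < w0)
    (hγ : γ1 ∈ Set.Ioo (0 : ℝ) 1)
    (hneg : N1*(γ1/w0)^2 - N2*(γ1/w0) + δ < 0)
    (v : ℝ → ℝ)
    (hv : ∀ x, v x = (δ/N2) * (1 - Real.exp (-(N2/N1)*(x - w0)))
                      + (γ1/w0) * Real.exp (-(N2/N1)*(x - w0))) :
    ∃ b, w0 < b ∧ (v b)^2 + deriv v b = 0 := by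
  set c : ℝ := N2/N1 with hc
  have hcpos : 0 < c := div_pos hN2 hN1
  set A : ℝ := δ/N1 - (N2/N1)*(γ1/w0) with hA
  have hvf : v = fun x => (δ/N2) * (1 - Real.exp (-c*(x - w0)))
                      + (γ1/w0) * Real.exp (-c*(x - w0)) := funext hv
  have hder : ∀ x : ℝ, HasDerivAt v (A * Real.exp (-c*(x - w0))) x := by
    intro x
    rw [hvf]
    have h1 : HasDerivAt (fun x : ℝ => -c*(x - w0)) (-c) x := by
      simpa using ((hasDerivAt_id x).sub_const w0).const_mul (-c)
    have h2 : HasDerivAt (fun x : ℝ => Real.exp (-c*(x - w0)))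
        (Real.exp (-c*(x - w0)) * (-c)) x := h1.exp
    have h3 := ((h2.const_sub 1).const_mul (δ/N2)).add (h2.const_mul (γ1/w0))
    refine h3.congr_deriv ?_
    rw [hA, hc]
    field_simp [hA, hc]
    ring
  have hderiv : ∀ x : ℝ, deriv v x = A * Real.exp (-c*(x - w0)) :=
    fun x => (hder x).deriv
  set f : ℝ → ℝ := fun x => (v x)^2 + deriv v x with hf
  have hfe : f = fun x => ((δ/N2) * (1 - Real.exp (-c*(x - w0)))
                      + (γ1/w0) * Real.exp (-c*(x - w0)))^2
                      + A * Real.exp (-c*(x - w0)) := by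
    funext x
    simp only [hf, hderiv x, hv x]
  have hcont : Continuous f := by
    rw [hfe]; fun_prop
  -- f w0 < 0
  have hfw0 : f w0 < 0 := by
    have : f w0 = (N1*(γ1/w0)^2 - N2*(γ1/w0) + δ) / N1 := by
      rw [hfe]
      simp only [sub_self, mul_zero, neg_zero, Real.exp_zero]
      rw [hA]
      field_simp [hA]
      ring
    rw [this]
    exact div_neg_of_neg_of_pos hneg hN1
  -- f tends to (δ/N2)^2 > 0 at infinity
  have hexp : Filter.Tendsto (fun x : ℝ => Real.exp (-c*(x - w0)))
      Filter.atTop (nhds 0) := by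
    apply Real.tendsto_exp_atBot.comp
    have h1 : Filter.Tendsto (fun x : ℝ => c*(x - w0)) Filter.atTop Filter.atTop := by
      apply Filter.Tendsto.const_mul_atTop hcpos
      exact Filter.tendsto_atTop_add_const_right _ (-w0) Filter.tendsto_id
    have h2 := Filter.tendsto_neg_atBot_iff.mpr h1
    refine h2.congr (by intro x; ring)
  have hlim : Filter.Tendsto f Filter.atTop (nhds ((δ/N2)^2)) := by
    rw [hfe]
    have h1 : Filter.Tendsto (fun x : ℝ => (δ/N2) * (1 - Real.exp (-c*(x - w0)))
        + (γ1/w0) * Real.exp (-c*(x - w0))) Filter.atTop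
        (nhds ((δ/N2) * (1 - 0) + (γ1/w0) * 0)) :=
      ((tendsto_const_nhds.sub hexp).const_mul (δ/N2)).add (hexp.const_mul (γ1/w0))
    have h2 := (h1.pow 2).add (hexp.const_mul A)
    convert h2 using 2
    norm_num
  have hpos : ∀ᶠ x in Filter.atTop, 0 < f x :=
    hlim.eventually (eventually_gt_nhds (by positivity))
  obtain ⟨X, hX1, hX2⟩ := (hpos.and (Filter.eventually_gt_atTop w0)).exists
  have hsub := intermediate_value_Ioo (le_of_lt hX2) hcont.continuousOn
  have h0 : (0:ℝ) ∈ Set.Ioo (f w0) (f X) := ⟨hfw0, hX1⟩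
  obtain ⟨b, hb, hfb⟩ := hsub h0
  exact ⟨b, hb.1, hfb⟩
end

section
/- Let N1, N2, N3, δ be positive real constants with N1 ≠ N3 and N2² + 4δ(N1−N3) > 0, let γ2± := (−N2 ± √(N2² + 4δ(N1−N3)))/(2N1), and let K+, K− be real constants. On any open interval I on which u(x) := K+·e^{γ2+·x} + K−·e^{γ2−·x} is strictly positive, the function g(x) := u(x)^{N1/(N1−N3)} satisfies N1·g''(x) + N2·g'(x) − N3·g'(x)²/g(x) − δ·g(x) = 0. -/
theorem power_of_exp_combination_solves_hjb
    (N1 N2 N3 δ : ℝ)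
    (hN1 : 0 < N1) (hN2 : 0 < N2) (hN3 : 0 < N3) (hδ : 0 < δ)
    (hne : N1 ≠ N3)
    (hdisc : 0 < N2^2 + 4*δ*(N1 - N3))
    (γ2p γ2m : ℝ)
    (hγ2p : γ2p = (-N2 + Real.sqrt (N2^2 + 4*δ*(N1 - N3))) / (2*N1))
    (hγ2m : γ2m = (-N2 - Real.sqrt (N2^2 + 4*δ*(N1 - N3))) / (2*N1))
    (Kp Km : ℝ) (a b : ℝ)
    (hu : ∀ x ∈ Set.Ioo a b, 0 < Kp * Real.exp (γ2p*x) + Km * Real.exp (γ2m*x)) :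
    ∀ x ∈ Set.Ioo a b,
      N1 * deriv (deriv (fun y =>
              (Kp * Real.exp (γ2p*y) + Km * Real.exp (γ2m*y)) ^ (N1/(N1 - N3)))) x
        + N2 * deriv (fun y =>
              (Kp * Real.exp (γ2p*y) + Km * Real.exp (γ2m*y)) ^ (N1/(N1 - N3))) x
        - N3 * (deriv (fun y =>
              (Kp * Real.exp (γ2p*y) + Km * Real.exp (γ2m*y)) ^ (N1/(N1 - N3))) x)^2
            / ((Kp * Real.exp (γ2p*x) + Km * Real.exp (γ2m*x)) ^ (N1/(N1 - N3)))
        - δ * ((Kp * Real.exp (γ2p*x) + Km * Real.exp (γ2m*x)) ^ (N1/(N1 - N3))) = 0 := by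
  intro x hx
  set p : ℝ := N1/(N1 - N3) with hp
  have hsub : N1 - N3 ≠ 0 := sub_ne_zero.mpr hne
  set U : ℝ → ℝ := fun y => Kp * Real.exp (γ2p*y) + Km * Real.exp (γ2m*y) with hU
  set V : ℝ → ℝ := fun y => Kp * (γ2p * Real.exp (γ2p*y)) + Km * (γ2m * Real.exp (γ2m*y)) with hV
  set W : ℝ → ℝ := fun y => Kp * (γ2p * (γ2p * Real.exp (γ2p*y))) + Km * (γ2m * (γ2m * Real.exp (γ2m*y))) with hW
  have hexp : ∀ (γ y : ℝ), HasDerivAt (fun t => Real.exp (γ*t)) (γ * Real.exp (γ*y)) y := by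
    intro γ y
    simpa [mul_comm, Function.comp_def] using (Real.hasDerivAt_exp (γ*y)).comp y ((hasDerivAt_id y).const_mul γ)
  have hUd : ∀ y, HasDerivAt U (V y) y := fun y =>
    ((hexp γ2p y).const_mul Kp).add ((hexp γ2m y).const_mul Km)
  have hVd : ∀ y, HasDerivAt V (W y) y := fun y =>
    (((hexp γ2p y).const_mul γ2p).const_mul Kp).add (((hexp γ2m y).const_mul γ2m).const_mul Km)
  have hgd : ∀ y ∈ Set.Ioo a b,
      HasDerivAt (fun t => U t ^ p) (p * (U y ^ (p-1) * V y)) y := by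
    intro y hy
    rw [show p * (U y ^ (p-1) * V y) = V y * p * U y ^ (p-1) by ring]
    exact (hUd y).rpow_const (Or.inl (hu y hy).ne')
  have hA : 0 < U x := hu x hx
  have heq : deriv (fun t => U t ^ p) =ᶠ[nhds x] (fun y => p * (U y ^ (p-1) * V y)) :=
    Filter.eventuallyEq_of_mem (isOpen_Ioo.mem_nhds hx) (fun y hy => (hgd y hy).deriv)
  have hd1 : deriv (fun t => U t ^ p) x = p * (U x ^ (p-1) * V x) := (hgd x hx).deriv
  have h1 : HasDerivAt (fun y => U y ^ (p-1)) (V x * (p-1) * U x ^ (p-1-1)) x :=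
    (hUd x).rpow_const (Or.inl hA.ne')
  have hhd : HasDerivAt (fun y => p * (U y ^ (p-1) * V y))
      (p * ((V x * (p-1) * U x ^ (p-1-1)) * V x + U x ^ (p-1) * W x)) x :=
    (h1.mul (hVd x)).const_mul p
  have hd2 : deriv (deriv (fun t => U t ^ p)) x
      = p * ((V x * (p-1) * U x ^ (p-1-1)) * V x + U x ^ (p-1) * W x) := by
    rw [heq.deriv_eq]; exact hhd.deriv
  -- roots of the quadratic
  have hs : Real.sqrt (N2^2 + 4*δ*(N1 - N3)) ^ 2 = N2^2 + 4*δ*(N1 - N3) :=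
    Real.sq_sqrt hdisc.le
  have hroot : ∀ γ : ℝ, (γ = (-N2 + Real.sqrt (N2^2 + 4*δ*(N1 - N3))) / (2*N1) ∨
      γ = (-N2 - Real.sqrt (N2^2 + 4*δ*(N1 - N3))) / (2*N1)) →
      N1 * γ^2 + N2 * γ - δ*(N1-N3)/N1 = 0 := by
    rintro γ (rfl | rfl) <;> field_simp <;> linear_combination hs
  have hrp := hroot γ2p (Or.inl hγ2p)
  have hrm := hroot γ2m (Or.inr hγ2m)
  have hode : N1 * W x + N2 * V x = (δ*(N1-N3)/N1) * U x := by
    simp only [hU, hV, hW]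
    linear_combination (Kp * Real.exp (γ2p*x)) * hrp + (Km * Real.exp (γ2m*x)) * hrm
  -- rewrite powers
  have e1 : U x ^ (p-1) = U x ^ p / U x := by
    rw [Real.rpow_sub hA, Real.rpow_one]
  have e2 : U x ^ (p-1-1) = U x ^ p / U x / U x := by
    rw [Real.rpow_sub hA, Real.rpow_sub hA, Real.rpow_one]
  have hP : 0 < U x ^ p := Real.rpow_pos_of_pos hA p
  have hcoef : N1 * p * (p-1) = N3 * p^2 := by
    rw [hp]; field_simp; ring
  have hpd : p * (δ*(N1-N3)/N1) = δ := by
    rw [hp]; field_simp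
  rw [hd2, hd1, e1, e2]
  -- pure algebra
  set A := U x
  set P := A ^ p
  set Vx := V x
  set Wx := W x
  have hA' : A ≠ 0 := hA.ne'
  have hP' : P ≠ 0 := hP.ne'
  have step : N1 * (p * ((Vx * (p-1) * (P/A/A)) * Vx + (P/A) * Wx))
      + N2 * (p * ((P/A) * Vx))
      - N3 * (p * ((P/A) * Vx))^2 / P - δ * P
      = (N1*p*(p-1) - N3*p^2) * (Vx^2 * (P/(A*A)))
        + (p * (N1*Wx + N2*Vx)) * (P/A) - δ*P := by
    field_simp
    ring
  rw [step, hode, hcoef]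
  have h2 : A * (P/A) = P := mul_div_cancel₀ P hA'
  calc (N3*p^2 - N3*p^2) * (Vx^2 * (P/(A*A))) + (p * ((δ*(N1-N3)/N1)*A)) * (P/A) - δ*P
      = (p * (δ*(N1-N3)/N1)) * (A * (P/A)) - δ*P := by ring
    _ = 0 := by rw [h2, hpd]; ring
end

section
/- Let N1, N2, δ be real constants with N1, N2 > 0, and let K > 0 and C be real constants. The function g(x) := K·exp(δ·x/N2 − (C·N1/N2)·e^{−(N2/N1)·x}) satisfies N1·g''(x) + N2·g'(x) − N1·g'(x)²/g(x) − δ·g(x) = 0 for all real x. -/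
theorem degenerate_case_solution
    (N1 N2 δ : ℝ) (hN1 : 0 < N1) (hN2 : 0 < N2)
    (K C : ℝ) (hK : 0 < K) :
    ∀ x : ℝ,
      N1 * deriv (deriv (fun y =>
            K * Real.exp (δ*y/N2 - (C*N1/N2) * Real.exp (-(N2/N1)*y)))) x
        + N2 * deriv (fun y =>
            K * Real.exp (δ*y/N2 - (C*N1/N2) * Real.exp (-(N2/N1)*y))) x
        - N1 * (deriv (fun y =>
            K * Real.exp (δ*y/N2 - (C*N1/N2) * Real.exp (-(N2/N1)*y))) x)^2
            / (K * Real.exp (δ*x/N2 - (C*N1/N2) * Real.exp (-(N2/N1)*x)))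
        - δ * (K * Real.exp (δ*x/N2 - (C*N1/N2) * Real.exp (-(N2/N1)*x))) = 0 := by
  have hN1' : N1 ≠ 0 := hN1.ne'
  have hN2' : N2 ≠ 0 := hN2.ne'
  set g : ℝ → ℝ := fun y =>
    K * Real.exp (δ*y/N2 - (C*N1/N2) * Real.exp (-(N2/N1)*y)) with hgdef
  set v : ℝ → ℝ := fun y => δ/N2 + C * Real.exp (-(N2/N1)*y) with hvdef
  -- derivative of g
  have hg : ∀ y, HasDerivAt g (g y * v y) y := by
    intro y
    have he : HasDerivAt (fun t : ℝ => Real.exp (-(N2/N1)*t))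
        (-(N2/N1) * Real.exp (-(N2/N1)*y)) y := by
      have h1 : HasDerivAt (fun t : ℝ => -(N2/N1)*t) (-(N2/N1)) y := by
        simpa using (hasDerivAt_id y).const_mul (-(N2/N1))
      simpa [mul_comm] using h1.exp
    have hu : HasDerivAt (fun t => δ*t/N2 - (C*N1/N2) * Real.exp (-(N2/N1)*t))
        (v y) y := by
      have h1 : HasDerivAt (fun t : ℝ => δ*t/N2) (δ/N2) y := by
        have := ((hasDerivAt_id y).const_mul δ).div_const N2
        simpa using this
      have h2 := he.const_mul (C*N1/N2)
      have := h1.sub h2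
      refine this.congr_deriv ?_
      show _ = δ/N2 + C * Real.exp (-(N2/N1)*y)
      field_simp
      ring
    have := hu.exp.const_mul K
    simpa [hgdef, mul_assoc, mul_comm, mul_left_comm] using this
  have hderiv : deriv g = fun y => g y * v y := funext fun y => (hg y).deriv
  intro x
  -- derivative of v
  have hv : HasDerivAt v (-(N2/N1) * (C * Real.exp (-(N2/N1)*x))) x := by
    have he : HasDerivAt (fun t : ℝ => Real.exp (-(N2/N1)*t))
        (-(N2/N1) * Real.exp (-(N2/N1)*x)) x := by
      have h1 : HasDerivAt (fun t : ℝ => -(N2/N1)*t) (-(N2/N1)) x := by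
        simpa using (hasDerivAt_id x).const_mul (-(N2/N1))
      simpa [mul_comm] using h1.exp
    have := (he.const_mul C).const_add (δ/N2)
    refine this.congr_deriv ?_
    ring
  have hgv : HasDerivAt (fun y => g y * v y)
      (g x * v x * v x + g x * (-(N2/N1) * (C * Real.exp (-(N2/N1)*x)))) x :=
    (hg x).mul hv
  have h2 : deriv (deriv g) x
      = g x * v x * v x + g x * (-(N2/N1) * (C * Real.exp (-(N2/N1)*x))) := by
    rw [hderiv]; exact hgv.deriv
  have h1 : deriv g x = g x * v x := (hg x).deriv
  have hgx : g x ≠ 0 := by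
    have : (0:ℝ) < g x := mul_pos hK (Real.exp_pos _)
    exact this.ne'
  rw [h2, h1]
  have hgxval : K * Real.exp (δ*x/N2 - (C*N1/N2) * Real.exp (-(N2/N1)*x)) = g x := rfl
  rw [hgxval]
  have hvx : v x = δ/N2 + C * Real.exp (-(N2/N1)*x) := rfl
  rw [hvx]
  field_simp
  ring
end

section
/- Let ρ ∈ (−1,1) and μ1, μ2, σ1, σ2, δ > 0. Set A₀ := [(μ1σ2 − μ2σ1)² + 2(1−ρ)μ1μ2σ1σ2]/(2σ1²σ2²(1−ρ²)) and γ1 := 2δσ1²σ2²(1−ρ²)/[(μ1σ2 − μ2σ1)² + 2(1−ρ)μ1μ2σ1σ2 + 2δσ1²σ2²(1−ρ²)]. Then γ1 ∈ (0,1), and for every K > 0 the function g(x) := K·x^{γ1} satisfies −A₀·g'(x)²/g''(x) − δ·g(x) = 0 for all x > 0. -/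
/-! With `g = K x^γ` one has `g'² / g'' = K γ x^γ / (γ - 1)`, so the HJB equation
`-A₀ g'² / g'' = δ g` reduces to the linear condition `A₀ γ = δ (1 - γ)` on the exponent.
Writing `A₀ = N / D` with `N, D > 0`, its solution is `γ = δ D / (N + δ D) ∈ (0, 1)`. -/

open Real Set

theorem deriv_const_mul_rpow (K γ : ℝ) :
    deriv (fun y : ℝ => K * y ^ γ) = fun y => K * γ * y ^ (γ - 1) := by
  funext y
  rw [deriv_const_mul_field, Real.deriv_rpow_const, mul_assoc]

theorem deriv_deriv_const_mul_rpow (K γ : ℝ) :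
    deriv (deriv fun y : ℝ => K * y ^ γ) = fun y => K * γ * (γ - 1) * y ^ (γ - 2) := by
  rw [deriv_const_mul_rpow]
  funext y
  rw [deriv_const_mul_field, Real.deriv_rpow_const, sub_sub, one_add_one_eq_two]
  ring

theorem neg_mul_deriv_sq_div_deriv_deriv_const_mul_rpow {A δ K γ x : ℝ} (hx : 0 < x)
    (hK : K ≠ 0) (hγ : γ ≠ 0) (hγ_one : γ ≠ 1) (h : A * γ = δ * (1 - γ)) :
    -A * (deriv (fun y : ℝ => K * y ^ γ) x) ^ 2 / deriv (deriv fun y : ℝ => K * y ^ γ) x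
      - δ * (K * x ^ γ) = 0 := by
  have hsq : (x ^ (γ - 1)) ^ 2 = x ^ (γ - 2) * x ^ γ := by
    rw [← rpow_natCast, ← rpow_mul hx.le, ← rpow_add hx]
    ring_nf
  have hpow : x ^ (γ - 2) ≠ 0 := (rpow_pos_of_pos hx _).ne'
  have hγ_sub : γ - 1 ≠ 0 := sub_ne_zero.mpr hγ_one
  have hKγ : K * γ ≠ 0 := mul_ne_zero hK hγ
  rw [deriv_deriv_const_mul_rpow, deriv_const_mul_rpow, mul_pow, hsq]
  field_simp
  linear_combination (-K * x ^ γ) * h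

theorem div_add_mem_Ioo {a b : ℝ} (ha : 0 < a) (hb : 0 < b) : b / (a + b) ∈ Ioo 0 1 :=
  ⟨by positivity, (div_lt_one (by positivity)).mpr (by linarith)⟩

theorem div_mul_div_add_eq_mul_one_sub {N D δ : ℝ} (hD : D ≠ 0) (h : N + δ * D ≠ 0) :
    N / D * (δ * D / (N + δ * D)) = δ * (1 - δ * D / (N + δ * D)) := by
  rw [one_sub_div h, add_sub_cancel_right]
  field_simp

theorem power_solution_no_uncertainty
    (ρ μ1 μ2 σ1 σ2 δ : ℝ)
    (hρ : ρ ∈ Set.Ioo (-1 : ℝ) 1)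
    (hμ1 : 0 < μ1) (hμ2 : 0 < μ2) (hσ1 : 0 < σ1) (hσ2 : 0 < σ2) (hδ : 0 < δ)
    (A0 γ1 : ℝ)
    (hA0 : A0 = ((μ1*σ2 - μ2*σ1)^2 + 2*(1-ρ)*μ1*μ2*σ1*σ2) / (2*σ1^2*σ2^2*(1-ρ^2)))
    (hγ1 : γ1 = 2*δ*σ1^2*σ2^2*(1-ρ^2)
        / ((μ1*σ2 - μ2*σ1)^2 + 2*(1-ρ)*μ1*μ2*σ1*σ2 + 2*δ*σ1^2*σ2^2*(1-ρ^2))) :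
    γ1 ∈ Set.Ioo (0 : ℝ) 1 ∧
      ∀ K : ℝ, 0 < K → ∀ x : ℝ, 0 < x →
        -A0 * (deriv (fun y : ℝ => K * y ^ γ1) x)^2
            / (deriv (deriv (fun y : ℝ => K * y ^ γ1)) x)
          - δ * (K * x ^ γ1) = 0 := by
  obtain ⟨hρ_gt, hρ_lt⟩ := hρ
  set N := (μ1*σ2 - μ2*σ1)^2 + 2*(1-ρ)*μ1*μ2*σ1*σ2
  set D := 2*σ1^2*σ2^2*(1-ρ^2)
  have hN : 0 < N := by
    have : 0 < 2*(1-ρ)*μ1*μ2*σ1*σ2 := by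
      have : 0 < 1 - ρ := by linarith
      positivity
    positivity
  have hD : 0 < D := by
    have : 0 < 1 - ρ^2 := by nlinarith
    positivity
  have hδD : 0 < δ * D := mul_pos hδ hD
  have hγ : γ1 = δ * D / (N + δ * D) := by rw [hγ1]; ring
  have hγ_mem : γ1 ∈ Ioo 0 1 := hγ ▸ div_add_mem_Ioo hN hδD
  have hexp : A0 * γ1 = δ * (1 - γ1) := by
    rw [hA0, hγ]
    exact div_mul_div_add_eq_mul_one_sub hD.ne' (by positivity)
  exact ⟨hγ_mem, fun K hK x hx =>
    neg_mul_deriv_sq_div_deriv_deriv_const_mul_rpow hx hK.ne' hγ_mem.1.ne' hγ_mem.2.ne hexp⟩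
end

section
/- Let ρ ∈ (−1,1) and μ1, μ2, σ1, σ2, δ > 0 with μ1σ2 − ρμ2σ1 > 0 and μ2σ1 − ρμ1σ2 > 0. Set γ1 := 2δσ1²σ2²(1−ρ²)/[(μ1σ2 − μ2σ1)² + 2(1−ρ)μ1μ2σ1σ2 + 2δσ1²σ2²(1−ρ²)], w1 := σ1²σ2(1−ρ²)(1−γ1)/(μ1σ2 − ρμ2σ1), w2 := σ1σ2²(1−ρ²)(1−γ1)/(μ2σ1 − ρμ1σ2), and M := (1/2)σ1²/w1² + (1/2)σ2²/w2² + ρσ1σ2/(w1·w2). Then μ1/w1 + μ2/w2 = 2·M·(1−γ1) and δ = M·γ1·(1−γ1). -/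
set_option maxHeartbeats 1600000 in
theorem no_uncertainty_identities
    (ρ μ1 μ2 σ1 σ2 δ : ℝ)
    (hρ : ρ ∈ Set.Ioo (-1 : ℝ) 1)
    (hμ1 : 0 < μ1) (hμ2 : 0 < μ2) (hσ1 : 0 < σ1) (hσ2 : 0 < σ2) (hδ : 0 < δ)
    (h1 : 0 < μ1*σ2 - ρ*μ2*σ1) (h2 : 0 < μ2*σ1 - ρ*μ1*σ2)
    (γ1 w1 w2 M : ℝ)
    (hγ1 : γ1 = 2*δ*σ1^2*σ2^2*(1-ρ^2)
        / ((μ1*σ2 - μ2*σ1)^2 + 2*(1-ρ)*μ1*μ2*σ1*σ2 + 2*δ*σ1^2*σ2^2*(1-ρ^2)))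
    (hw1 : w1 = σ1^2*σ2*(1-ρ^2)*(1-γ1) / (μ1*σ2 - ρ*μ2*σ1))
    (hw2 : w2 = σ1*σ2^2*(1-ρ^2)*(1-γ1) / (μ2*σ1 - ρ*μ1*σ2))
    (hM : M = (1/2)*σ1^2/w1^2 + (1/2)*σ2^2/w2^2 + ρ*σ1*σ2/(w1*w2)) :
    μ1/w1 + μ2/w2 = 2*M*(1-γ1) ∧ δ = M*γ1*(1-γ1) := by
  obtain ⟨hρl, hρr⟩ := hρ
  have hρ2 : 0 < 1 - ρ^2 := by nlinarith
  have hQ : 0 < μ1^2*σ2^2 - 2*ρ*μ1*μ2*σ1*σ2 + μ2^2*σ1^2 := by nlinarith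
  have hQeq : (μ1*σ2 - μ2*σ1)^2 + 2*(1-ρ)*μ1*μ2*σ1*σ2
      = μ1^2*σ2^2 - 2*ρ*μ1*μ2*σ1*σ2 + μ2^2*σ1^2 := by ring
  have hSpos : 0 < σ1^2*σ2^2*(1-ρ^2) := by positivity
  have hD : 0 < (μ1*σ2 - μ2*σ1)^2 + 2*(1-ρ)*μ1*μ2*σ1*σ2 + 2*δ*σ1^2*σ2^2*(1-ρ^2) := by
    rw [hQeq] at *; nlinarith
  have hg : 1 - γ1 = (μ1^2*σ2^2 - 2*ρ*μ1*μ2*σ1*σ2 + μ2^2*σ1^2)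
      / ((μ1*σ2 - μ2*σ1)^2 + 2*(1-ρ)*μ1*μ2*σ1*σ2 + 2*δ*σ1^2*σ2^2*(1-ρ^2)) := by
    rw [hγ1]; field_simp; linarith [hQeq]
  have hgpos : 0 < 1 - γ1 := by rw [hg]; positivity
  have hw1p : 0 < w1 := by rw [hw1]; positivity
  have hw2p : 0 < w2 := by rw [hw2]; positivity
  have hsum : μ1/w1 + μ2/w2
      = (μ1^2*σ2^2 - 2*ρ*μ1*μ2*σ1*σ2 + μ2^2*σ1^2)/(σ1^2*σ2^2*(1-ρ^2)*(1-γ1)) := by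
    rw [hw1, hw2]
    field_simp
    ring
  have hMval : M = (μ1^2*σ2^2 - 2*ρ*μ1*μ2*σ1*σ2 + μ2^2*σ1^2)
      / (2*(σ1^2*σ2^2*(1-ρ^2))*(1-γ1)^2) := by
    rw [hM, hw1, hw2]
    field_simp
    ring
  constructor
  · rw [hsum, hMval]
    field_simp
  · have hratio : γ1 / (1-γ1) = 2*δ*(σ1^2*σ2^2*(1-ρ^2))
        / (μ1^2*σ2^2 - 2*ρ*μ1*μ2*σ1*σ2 + μ2^2*σ1^2) := by
      rw [hg, hγ1]
      rw [div_div_div_eq]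
      field_simp
    have key : M*γ1*(1-γ1) = (M*(1-γ1)^2) * (γ1/(1-γ1)) := by
      field_simp
    rw [key, hMval, hratio]
    have hQ' : (μ1^2*σ2^2 - 2*ρ*μ1*μ2*σ1*σ2 + μ2^2*σ1^2) ≠ 0 := hQ.ne'
    have hS' : (σ1^2*σ2^2*(1-ρ^2)) ≠ 0 := hSpos.ne'
    have hg' : (1-γ1) ≠ 0 := hgpos.ne'
    generalize hq : μ1^2*σ2^2 - 2*ρ*μ1*μ2*σ1*σ2 + μ2^2*σ1^2 = Q at hQ' ⊢
    generalize hs : σ1^2*σ2^2*(1-ρ^2) = S at hS' ⊢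
    generalize hG : 1-γ1 = g at hg' ⊢
    field_simp
end

section
/- Let ρ ∈ (−1,1), let μ1, μ2, σ1, σ2, β1, β2 > 0, and let G > 0, G1 > 0, G2 < 0 be real numbers. Define F(π1, π2) := ((1/2)σ1²π1² + (1/2)σ2²π2² + ρσ1σ2π1π2)·G2 + (μ1π1 + μ2π2)·G1 − (1/2)(β1σ1²π1² + β2σ2²π2²)·G1²/G on ℝ², and set D := (β1+β2)·G2·G1²·G − (1−ρ²)·G2²·G² − β1β2·G1⁴. Then D < 0, F is strictly concave on ℝ², and F attains its unique global maximum at the point (π̂1, π̂2) given by π̂1 = [(μ1σ2 − ρμ2σ1)·G2·G1·G² − β2μ1σ2·G1³·G]/(σ1²σ2·D) and π̂2 = [(μ2σ1 − ρμ1σ2)·G2·G1·G² − β1μ2σ1·G1³·G]/(σ1σ2²·D). -/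
private lemma reins_aux_Q (ρ σ1 σ2 β1 β2 G G1 G2 : ℝ)
    (hρ1 : -1 < ρ) (hρ2 : ρ < 1)
    (hσ1 : 0 < σ1) (hσ2 : 0 < σ2) (hβ1 : 0 < β1) (hβ2 : 0 < β2)
    (hG : 0 < G) (hG1 : 0 < G1) (hG2 : G2 < 0)
    (v1 v2 : ℝ) (hv : v1 ≠ 0 ∨ v2 ≠ 0) :
    0 < -(σ1^2*v1^2 + σ2^2*v2^2 + 2*ρ*σ1*σ2*v1*v2)*(G2*G)
        + (β1*σ1^2*v1^2 + β2*σ2^2*v2^2)*G1^2 := by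
  have h1 : 0 ≤ -(σ1^2*v1^2 + σ2^2*v2^2 + 2*ρ*σ1*σ2*v1*v2)*(G2*G) := by
    have : 0 ≤ σ1^2*v1^2 + σ2^2*v2^2 + 2*ρ*σ1*σ2*v1*v2 := by
      nlinarith [sq_nonneg (σ1*v1 + ρ*σ2*v2), sq_nonneg (σ2*v2), sq_nonneg ρ,
        mul_pos hσ1 hσ2, sq_nonneg (σ1*v1 - σ2*v2), sq_nonneg (σ1*v1 + σ2*v2)]
    nlinarith [mul_pos hG (neg_pos.mpr hG2)]
  have h2 : 0 < (β1*σ1^2*v1^2 + β2*σ2^2*v2^2)*G1^2 := by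
    rcases hv with h | h
    · positivity
    · positivity
  linarith


theorem reinsurance_objective_strictly_concave_max
    (ρ μ1 μ2 σ1 σ2 β1 β2 : ℝ)
    (hρ : ρ ∈ Set.Ioo (-1 : ℝ) 1)
    (hμ1 : 0 < μ1) (hμ2 : 0 < μ2) (hσ1 : 0 < σ1) (hσ2 : 0 < σ2)
    (hβ1 : 0 < β1) (hβ2 : 0 < β2)
    (G G1 G2 : ℝ) (hG : 0 < G) (hG1 : 0 < G1) (hG2 : G2 < 0)
    (F : ℝ × ℝ → ℝ)
    (hF : ∀ p : ℝ × ℝ, F p =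
        ((1/2)*σ1^2*p.1^2 + (1/2)*σ2^2*p.2^2 + ρ*σ1*σ2*p.1*p.2) * G2
          + (μ1*p.1 + μ2*p.2) * G1
          - (1/2)*(β1*σ1^2*p.1^2 + β2*σ2^2*p.2^2) * G1^2 / G)
    (D π1 π2 : ℝ)
    (hD : D = (β1+β2)*G2*G1^2*G - (1-ρ^2)*G2^2*G^2 - β1*β2*G1^4)
    (hπ1 : π1 = ((μ1*σ2 - ρ*μ2*σ1)*G2*G1*G^2 - β2*μ1*σ2*G1^3*G) / (σ1^2*σ2*D))
    (hπ2 : π2 = ((μ2*σ1 - ρ*μ1*σ2)*G2*G1*G^2 - β1*μ2*σ1*G1^3*G) / (σ1*σ2^2*D)) :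
    D < 0 ∧
    StrictConcaveOn ℝ Set.univ F ∧
    (∀ p : ℝ × ℝ, p ≠ (π1, π2) → F p < F (π1, π2)) := by
  obtain ⟨hρ1, hρ2⟩ := hρ
  have hρ2' : 0 < 1 - ρ^2 := by nlinarith
  -- D < 0
  have hDlt : D < 0 := by
    rw [hD]
    have t1 : (β1+β2)*G2*G1^2*G < 0 := by
      have h0 : 0 < (β1+β2)*G1^2*G := by
        have hb : 0 < β1 + β2 := by linarith
        positivity
      nlinarith
    have hG2ne : G2 ≠ 0 := hG2.ne
    have t2 : 0 < (1-ρ^2)*G2^2*G^2 := by positivity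
    have t3 : 0 < β1*β2*G1^4 := by positivity
    linarith
  have hDne : D ≠ 0 := hDlt.ne
  -- first-order conditions
  have e1 : σ1^2*π1*(G2*G - β1*G1^2) + ρ*σ1*σ2*π2*(G2*G) + μ1*G1*G = 0 := by
    rw [hπ1, hπ2]; field_simp; rw [hD]; ring
  have e2 : σ2^2*π2*(G2*G - β2*G1^2) + ρ*σ1*σ2*π1*(G2*G) + μ2*G1*G = 0 := by
    rw [hπ1, hπ2]; field_simp; rw [hD]; ring
  -- positivity of the (negated) quadratic form
  have hQ := reins_aux_Q ρ σ1 σ2 β1 β2 G G1 G2 hρ1 hρ2 hσ1 hσ2 hβ1 hβ2 hG hG1 hG2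
  -- cleared-denominator form of F
  have hF' : ∀ p : ℝ × ℝ, 2*G*F p =
      σ1^2*p.1^2*(G2*G - β1*G1^2) + σ2^2*p.2^2*(G2*G - β2*G1^2)
        + 2*ρ*σ1*σ2*p.1*p.2*(G2*G) + 2*G*G1*(μ1*p.1 + μ2*p.2) := by
    intro p
    rw [hF p]
    field_simp
    ring
  refine ⟨hDlt, ⟨convex_univ, ?_⟩, ?_⟩
  · intro x _ y _ hxy a b ha hb hab
    have hb1 : b = 1 - a := by linarith
    subst hb1
    have hv : x.1 - y.1 ≠ 0 ∨ x.2 - y.2 ≠ 0 := by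
      by_contra h
      push_neg at h
      exact hxy (Prod.ext (by linarith [h.1]) (by linarith [h.2]))
    have hQ' := hQ _ _ hv
    have hz1 : (a • x + (1-a) • y).1 = a*x.1 + (1-a)*y.1 := by simp
    have hz2 : (a • x + (1-a) • y).2 = a*x.2 + (1-a)*y.2 := by simp
    have key : 2*G*(F (a • x + (1-a) • y) - (a * F x + (1-a) * F y)) =
        a*(1-a)*(-(σ1^2*(x.1-y.1)^2 + σ2^2*(x.2-y.2)^2 + 2*ρ*σ1*σ2*(x.1-y.1)*(x.2-y.2))*(G2*G)
          + (β1*σ1^2*(x.1-y.1)^2 + β2*σ2^2*(x.2-y.2)^2)*G1^2) := by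
      have hz := hF' (a • x + (1-a) • y)
      rw [hz1, hz2] at hz
      linear_combination hz - a * hF' x - (1-a) * hF' y
    have hpos : 0 < 2*G*(F (a • x + (1-a) • y) - (a * F x + (1-a) * F y)) := by
      rw [key]
      exact mul_pos (mul_pos ha hb) hQ'
    simp only [smul_eq_mul]
    rcases mul_pos_iff.mp hpos with ⟨_, hX⟩ | ⟨h', _⟩
    · linarith
    · linarith
  · intro p hp
    have hv : p.1 - π1 ≠ 0 ∨ p.2 - π2 ≠ 0 := by
      by_contra h
      push_neg at h
      exact hp (Prod.ext (by linarith [h.1]) (by linarith [h.2]))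
    have hQ' := hQ _ _ hv
    have key : 2*G*(F (π1, π2) - F p) =
        -(σ1^2*(p.1-π1)^2 + σ2^2*(p.2-π2)^2 + 2*ρ*σ1*σ2*(p.1-π1)*(p.2-π2))*(G2*G)
          + (β1*σ1^2*(p.1-π1)^2 + β2*σ2^2*(p.2-π2)^2)*G1^2 := by
      linear_combination hF' (π1, π2) - hF' p + (-2*(p.1-π1))*e1 + (-2*(p.2-π2))*e2
    have hpos : 0 < 2*G*(F (π1, π2) - F p) := by rw [key]; exact hQ'
    rcases mul_pos_iff.mp hpos with ⟨_, hX⟩ | ⟨h', _⟩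
    · linarith
    · linarith
end

section
/- Under the stated hypotheses, v'(x) + v(x)² converges as x → ∞ to (N1/(N1−N3)²)·[(1 − N3/N1)·δ − N2·γ2+], and this limit is strictly positive. -/
open Filter

theorem limit_of_v_prime_plus_v_sq
    (N1 N2 N3 δ w0 γ1 : ℝ)
    (hN1 : 0 < N1) (hN2 : 0 < N2) (hN3 : 0 < N3) (hδ : 0 < δ) (hw0 : 0 < w0)
    (hne : N1 ≠ N3)
    (hdisc : 0 < N2^2 + 4*δ*(N1 - N3))
    (hγ : γ1 ∈ Set.Ioo (0 : ℝ) 1)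
    (γ2p γ2m K3 : ℝ)
    (hγ2p : γ2p = (-N2 + Real.sqrt (N2^2 + 4*δ*(N1 - N3))) / (2*N1))
    (hγ2m : γ2m = (-N2 - Real.sqrt (N2^2 + 4*δ*(N1 - N3))) / (2*N1))
    (hγ2pne : γ2p ≠ (1 - N3/N1) * (γ1/w0))
    (hK3 : K3 = ((1 - N3/N1) * (γ1/w0) - γ2m) / (γ2p - (1 - N3/N1) * (γ1/w0))
                  * Real.exp ((γ2m - γ2p) * w0))
    (hK3pos : 0 < K3)
    (v : ℝ → ℝ)
    (hv : ∀ x, v x = (N1/(N1 - N3)) * (K3*γ2p*Real.exp (γ2p*x) + γ2m*Real.exp (γ2m*x))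
                      / (K3*Real.exp (γ2p*x) + Real.exp (γ2m*x))) :
    Tendsto (fun x => deriv v x + (v x)^2) atTop
        (nhds ((N1/(N1 - N3)^2) * ((1 - N3/N1)*δ - N2*γ2p))) ∧
    0 < (N1/(N1 - N3)^2) * ((1 - N3/N1)*δ - N2*γ2p) := by
  have hsub : N1 - N3 ≠ 0 := sub_ne_zero.mpr hne
  set s := Real.sqrt (N2^2 + 4*δ*(N1 - N3)) with hs
  have hs2 : s^2 = N2^2 + 4*δ*(N1 - N3) := Real.sq_sqrt hdisc.le
  have hspos : 0 < s := Real.sqrt_pos.mpr hdisc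
  -- γ2p satisfies the quadratic
  have h2N1 : (2:ℝ)*N1 ≠ 0 := by positivity
  have hlin : 2*N1*γ2p + N2 = s := by rw [hγ2p]; field_simp; ring
  have hquad : N1^2*γ2p^2 + N1*N2*γ2p = δ*(N1-N3) := by nlinarith [hlin, hs2]
  -- γ2p ≠ 0
  have hane : γ2p ≠ 0 := by
    intro h
    rw [h] at hlin
    have : N1 - N3 = 0 := by nlinarith [hs2, hlin]
    exact hsub this
  -- γ2m < γ2p
  have hba : γ2m - γ2p < 0 := by
    rw [hγ2p, hγ2m]
    rw [div_sub_div_same]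
    apply div_neg_of_neg_of_pos _ (by positivity)
    linarith
  set c := N1/(N1 - N3) with hc
  have hcne : c ≠ 0 := div_ne_zero hN1.ne' hsub
  -- the limit value equals c^2 * γ2p^2
  have hLeq : (N1/(N1 - N3)^2) * ((1 - N3/N1)*δ - N2*γ2p) = c^2 * γ2p^2 := by
    rw [hc]
    field_simp
    linear_combination (-1 : ℝ) * hquad
  -- positivity
  have hLpos : 0 < c^2 * γ2p^2 := by positivity
  refine ⟨?_, by rw [hLeq]; exact hLpos⟩
  -- denominators positive
  have hD : ∀ x : ℝ, 0 < K3*Real.exp (γ2p*x) + Real.exp (γ2m*x) := fun x => by positivity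
  have hvf : v = fun x => c * (K3*γ2p*Real.exp (γ2p*x) + γ2m*Real.exp (γ2m*x))
                      / (K3*Real.exp (γ2p*x) + Real.exp (γ2m*x)) := funext hv
  -- compute the derivative
  have hderiv : ∀ x : ℝ, deriv v x =
      c * (K3*(γ2p-γ2m)^2 * Real.exp (γ2p*x) * Real.exp (γ2m*x))
        / (K3*Real.exp (γ2p*x) + Real.exp (γ2m*x))^2 := by
    intro x
    have hEp : HasDerivAt (fun y => Real.exp (γ2p*y)) (Real.exp (γ2p*x) * γ2p) x := by
      simpa using (HasDerivAt.exp ((hasDerivAt_id x).const_mul γ2p))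
    have hEm : HasDerivAt (fun y => Real.exp (γ2m*y)) (Real.exp (γ2m*x) * γ2m) x := by
      simpa using (HasDerivAt.exp ((hasDerivAt_id x).const_mul γ2m))
    have hnum : HasDerivAt (fun y => c * (K3*γ2p*Real.exp (γ2p*y) + γ2m*Real.exp (γ2m*y)))
        (c * ((K3*γ2p)*(Real.exp (γ2p*x) * γ2p) + γ2m*(Real.exp (γ2m*x) * γ2m))) x := by
      exact ((hEp.const_mul (K3*γ2p)).add (hEm.const_mul γ2m)).const_mul c
    have hden : HasDerivAt (fun y => K3*Real.exp (γ2p*y) + Real.exp (γ2m*y))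
        (K3*(Real.exp (γ2p*x) * γ2p) + Real.exp (γ2m*x) * γ2m) x := by
      exact (hEp.const_mul K3).add hEm
    have hdiv := hnum.div hden (hD x).ne'
    have := hdiv.deriv
    rw [hvf]
    simp only [mul_div_assoc, Pi.div_def] at this ⊢
    rw [this]
    have hEpne : Real.exp (γ2p*x) ≠ 0 := (Real.exp_pos _).ne'
    have hEmne : Real.exp (γ2m*x) ≠ 0 := (Real.exp_pos _).ne'
    field_simp
    ring
  -- rewrite as composition with r x = exp ((γ2m - γ2p) x)
  set F : ℝ → ℝ := fun t => c * (K3*(γ2p-γ2m)^2 * t) / (K3 + t)^2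
      + (c * (K3*γ2p + γ2m*t) / (K3 + t))^2 with hF
  have hcomp : ∀ x : ℝ, deriv v x + (v x)^2 = F (Real.exp ((γ2m - γ2p)*x)) := by
    intro x
    have hsplit : Real.exp (γ2m*x) = Real.exp (γ2p*x) * Real.exp ((γ2m - γ2p)*x) := by
      rw [← Real.exp_add]; ring_nf
    have hEpne : Real.exp (γ2p*x) ≠ 0 := (Real.exp_pos _).ne'
    have hrpos : 0 < Real.exp ((γ2m - γ2p)*x) := Real.exp_pos _
    have hKr : K3 + Real.exp ((γ2m - γ2p)*x) ≠ 0 := by positivity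
    have hDx := (hD x).ne'
    rw [hderiv x, hv x, hF]
    rw [hsplit] at hDx ⊢
    field_simp
  have hr : Tendsto (fun x : ℝ => Real.exp ((γ2m - γ2p)*x)) atTop (nhds 0) := by
    apply Real.tendsto_exp_atBot.comp
    exact Tendsto.const_mul_atTop_of_neg hba tendsto_id
  have hK0 : (K3 + (0:ℝ)) ≠ 0 := by simpa using hK3pos.ne'
  have hFcont : ContinuousAt F 0 := by
    apply ContinuousAt.add
    · exact ContinuousAt.div (by fun_prop) (by fun_prop) (by simpa using pow_ne_zero 2 hK0)
    · exact (ContinuousAt.div (by fun_prop) (by fun_prop) hK0).pow 2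
  have hF0 : F 0 = c^2 * γ2p^2 := by
    rw [hF]
    field_simp
    ring
  have : Tendsto (fun x => deriv v x + (v x)^2) atTop (nhds (c^2 * γ2p^2)) := by
    have := (hF0 ▸ hFcont.tendsto).comp hr
    exact this.congr (fun x => (hcomp x).symm)
  rwa [hLeq]
end
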